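/- Let a_1,…,a_m be nonzero elements of Ω(x) and let ℓ ≥ 0 be an integer. Assume D ⊆ Ω is a finitely generated k-algebra with fraction field F such that a_1,…,a_m ∈ F(x). Then there is a basic open subset U of Hom_k(D,k̄) such that for every φ ∈ U: each a_i specializes to a well-defined nonzero element φ(a_i) of k̄(x) — i.e., writing a_i = p_i/q_i with p_i, q_i ∈ D[x], the polynomials φ(p_i), φ(q_i) ∈ k̄[x] obtained by applying φ to the coefficients are nonzero and φ(a_i) = φ(p_i)/φ(q_i) does not depend on the chosen representation — and 𝒵(a_1,…,a_m;ℓ) = 𝒵(φ(a_1),…,φ(a_m);ℓ). -/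

import Mathlib

/-!
Write `aᵢ = pᵢ / qᵢ` with `pᵢ, qᵢ ∈ D[x]`. Then `∏ aᵢ^{dᵢ} = N / N'` with `N, N'` products
of powers of the `pᵢ, qᵢ`, and over an algebraically closed field `N / N' = σ^ℓ(f) / f` for some
`f ≠ 0` iff `N` and `N'` have the same leading coefficient and the same roots modulo `ℤ ℓ`,
counted with multiplicity: one root `β` can be traded for `β - ℓ` using `f = x - β`.
So membership in `𝒵` depends only on multiplicative relations among the leading coefficients
of the `pᵢ, qᵢ` and on which differences of their roots lie in `ℤ ℓ`. Both are preserved and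
reflected by any specialization that is injective on the multiplicative group generated by
those leading coefficients and on the additive group generated by `1` and those roots, since
the roots of `φ(N)` are then the images of the roots of `N`.
-/

set_option linter.unusedSectionVars false
set_option linter.unusedVariables false

set_option linter.unusedSectionVars false
set_option linter.unusedVariables false

section Base

variable {Ω : Type*} [Field Ω] [IsAlgClosed Ω] [CharZero Ω]
variable (k : Type*) [Field k] [Algebra k Ω]
variable (kbar : Type*) [Field kbar] [Algebra k kbar] [IsAlgClosure k kbar]

/-- `Γ` is (the carrier set of) a finitely generated subgroup of the additive group `(Ω,+)`
or of the multiplicative group `(Ω∖{0},·)`. -/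
def IsFGAddOrMulSubgroup (Γ : Set Ω) : Prop :=
  (∃ H : AddSubgroup Ω, H.FG ∧ Γ = (H : Set Ω)) ∨
  (∃ H : Subgroup Ωˣ, H.FG ∧ Γ = Units.val '' (H : Set Ωˣ))

/-- The `D`-subalgebra `D[Γ]` of `Ω` generated by `Γ`. -/
def algAdj (D : Subalgebra k Ω) (Γ : Set Ω) : Subalgebra k Ω :=
  Algebra.adjoin k ((D : Set Ω) ∪ Γ)

theorem le_algAdj (D : Subalgebra k Ω) (Γ : Set Ω) : D ≤ algAdj k D Γ :=
  fun _ hx => Algebra.subset_adjoin (Set.mem_union_left _ hx)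

theorem subset_algAdj (D : Subalgebra k Ω) (Γ : Set Ω) :
    Γ ⊆ (algAdj k D Γ : Set Ω) :=
  fun _ hx => Algebra.subset_adjoin (Set.mem_union_right _ hx)

/-- `ℬ(D,Γ)`: restrictions to `D` of the `k`-homomorphisms `D[Γ] → k̄` injective on `Γ`. -/
def specB (D : Subalgebra k Ω) (Γ : Set Ω) : Set (↥D →ₐ[k] kbar) :=
  { φ | ∃ ψ : ↥(algAdj k D Γ) →ₐ[k] kbar,
      (∀ (a b : Ω) (ha : a ∈ Γ) (hb : b ∈ Γ),
        ψ ⟨a, subset_algAdj k D Γ ha⟩ = ψ ⟨b, subset_algAdj k D Γ hb⟩ → a = b) ∧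
      ψ.comp (Subalgebra.inclusion (le_algAdj k D Γ)) = φ }

/-- A basic open subset of `Hom_k(D,k̄)`: a finite intersection of sets `ℬ(D,Γ)`. -/
def IsBasicOpen (D : Subalgebra k Ω) (U : Set (↥D →ₐ[k] kbar)) : Prop :=
  ∃ s : Finset (Set Ω), s.Nonempty ∧ (∀ Γ ∈ s, IsFGAddOrMulSubgroup Γ) ∧
    U = ⋂ Γ ∈ s, specB k kbar D Γ

/-- The Zariski closed subset `𝒱(I)` of `Hom_k(D,k̄)`. -/
def specV (D : Subalgebra k Ω) (I : Ideal ↥D) : Set (↥D →ₐ[k] kbar) :=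
  { φ | ∀ a ∈ I, φ a = 0 }

/-- Density in the Zariski topology on `Hom_k(D,k̄)` (whose closed sets are the `𝒱(I)`). -/
def ZariskiDense (D : Subalgebra k Ω) (U : Set (↥D →ₐ[k] kbar)) : Prop :=
  ∀ I : Ideal ↥D, U ⊆ specV k kbar D I → specV k kbar D I = Set.univ

end Base


noncomputable section Shift

open Polynomial

theorem shift_comp_injective (K : Type*) [Field K] :
    Function.Injective fun p : Polynomial K => p.comp (Polynomial.X + 1) := by
  intro p q h
  have h2 : (p - q).comp (Polynomial.X + 1) = 0 := by
    rw [Polynomial.sub_comp]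
    simpa using sub_eq_zero.mpr h
  rcases Polynomial.comp_eq_zero_iff.mp h2 with h3 | ⟨_, h4⟩
  · exact sub_eq_zero.mp h3
  · exfalso
    have hdeg : (Polynomial.X + 1 : Polynomial K).natDegree = 1 := by
      simpa using Polynomial.natDegree_X_add_C (1 : K)
    rw [h4] at hdeg
    simp at hdeg

theorem shift_injective (K : Type*) [Field K] :
    Function.Injective ((algebraMap (Polynomial K) (FractionRing (Polynomial K))).comp
      (Polynomial.eval₂RingHom (Polynomial.C : K →+* Polynomial K) (Polynomial.X + 1))) := by
  refine (IsFractionRing.injective (Polynomial K) (FractionRing (Polynomial K))).comp ?_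
  intro p q h
  exact shift_comp_injective K h

/-- The shift automorphism `σ` of `K(x)` determined by `x ↦ x + 1` (and fixing `K`). -/
def shiftHom (K : Type*) [Field K] :
    FractionRing (Polynomial K) →+* FractionRing (Polynomial K) :=
  IsFractionRing.lift (shift_injective K)

end Shift

noncomputable section ZSet

/-- `𝒵(a₁,…,a_m;ℓ)`: the group of integer tuples `d` with `∏ i, a_i^{d_i} = σ^ℓ(f)/f`
for some nonzero `f` in `K(x)`. -/
def Zset {K : Type*} [Field K] {m : ℕ} (ℓ : ℕ) (a : Fin m → FractionRing (Polynomial K)) :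
    Set (Fin m → ℤ) :=
  { d | ∃ f : FractionRing (Polynomial K), f ≠ 0 ∧
      ∏ i, a i ^ d i = (⇑(shiftHom K))^[ℓ] f / f }

/-- The embedding `D[x] → Ω(x)`. -/
def embPolyX {Ω k : Type*} [Field Ω] [Field k] [Algebra k Ω] (D : Subalgebra k Ω) :
    Polynomial ↥D →+* FractionRing (Polynomial Ω) :=
  (algebraMap (Polynomial Ω) (FractionRing (Polynomial Ω))).comp
    (Polynomial.mapRingHom (algebraMap ↥D Ω))

/-- `A ∈ Ω(x)` specializes under `φ` to the well-defined element `y ∈ k̄(x)`: writing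
`A = p/q` with `p, q ∈ D[x]`, the polynomials `φ(p), φ(q) ∈ k̄[x]` are nonzero and
`y = φ(p)/φ(q)`. -/
def SpecRat {Ω k kbar : Type*} [Field Ω] [Field k] [Algebra k Ω]
    [Field kbar] [Algebra k kbar] (D : Subalgebra k Ω) (φ : ↥D →ₐ[k] kbar)
    (A : FractionRing (Polynomial Ω)) (y : FractionRing (Polynomial kbar)) : Prop :=
  ∃ p q : Polynomial ↥D,
    p.map φ.toRingHom ≠ 0 ∧ q.map φ.toRingHom ≠ 0 ∧
    A * embPolyX D q = embPolyX D p ∧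
    y * algebraMap (Polynomial kbar) (FractionRing (Polynomial kbar)) (q.map φ.toRingHom)
      = algebraMap (Polynomial kbar) (FractionRing (Polynomial kbar)) (p.map φ.toRingHom)

end ZSet

open Polynomial

section ZPowNum

variable {ι M : Type*} [Fintype ι]

/-- The numerator of `∏ (Pᵢ / Qᵢ)^{dᵢ}`, whose denominator is `zpowNum Q P d`. -/
def zpowNum [CommMonoid M] (P Q : ι → M) (d : ι → ℤ) : M :=
  ∏ i, P i ^ (d i).toNat * Q i ^ (-d i).toNat

theorem map_zpowNum {N F : Type*} [CommMonoid M] [CommMonoid N] [FunLike F M N]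
    [MonoidHomClass F M N] (f : F) (P Q : ι → M) (d : ι → ℤ) :
    f (zpowNum P Q d) = zpowNum (fun i => f (P i)) (fun i => f (Q i)) d := by
  simp only [zpowNum, map_prod, map_mul, map_pow]

theorem zpowNum_mem {S : Type*} [CommMonoid M] [SetLike S M] [SubmonoidClass S M] {s : S}
    {P Q : ι → M} (hP : ∀ i, P i ∈ s) (hQ : ∀ i, Q i ∈ s) (d : ι → ℤ) :
    zpowNum P Q d ∈ s :=
  prod_mem fun i _ => mul_mem (pow_mem (hP i) _) (pow_mem (hQ i) _)

theorem zpowNum_ne_zero [CommMonoidWithZero M] [NoZeroDivisors M] [Nontrivial M]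
    {P Q : ι → M} (hP : ∀ i, P i ≠ 0) (hQ : ∀ i, Q i ≠ 0) (d : ι → ℤ) :
    zpowNum P Q d ≠ 0 :=
  Finset.prod_ne_zero_iff.2 fun i _ =>
    mul_ne_zero (pow_ne_zero _ (hP i)) (pow_ne_zero _ (hQ i))

theorem prod_div_zpow_eq_zpowNum_div [Field M] (P Q : ι → M) (d : ι → ℤ) :
    ∏ i, (P i / Q i) ^ d i = zpowNum P Q d / zpowNum Q P d := by
  rw [zpowNum, zpowNum, ← Finset.prod_div_distrib]
  refine Finset.prod_congr rfl fun i _ => ?_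
  rcases Int.eq_nat_or_neg (d i) with ⟨n, hn | hn⟩ <;> rw [hn] <;> simp [div_pow]

theorem zpowNum_map {R S : Type*} [CommRing R] [CommRing S] (f : R →+* S) (P Q : ι → R[X])
    (d : ι → ℤ) :
    zpowNum (fun i => (P i).map f) (fun i => (Q i).map f) d = (zpowNum P Q d).map f :=
  (map_zpowNum (mapRingHom f) P Q d).symm

theorem map_leadingCoeff_zpowNum_mem {R S : Type*} [CommRing R] [NoZeroDivisors R]
    [CommMonoid M] [SetLike S M] [SubmonoidClass S M] {s : S} (f : R →* M) {P Q : ι → R[X]}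
    (hP : ∀ i, f (P i).leadingCoeff ∈ s) (hQ : ∀ i, f (Q i).leadingCoeff ∈ s)
    (d : ι → ℤ) : f (zpowNum P Q d).leadingCoeff ∈ s := by
  rw [← leadingCoeffHom_apply, map_zpowNum, map_zpowNum]
  exact zpowNum_mem hP hQ d

theorem mem_of_mem_roots_zpowNum {R : Type*} [CommRing R] [IsDomain R] {P Q : ι → R[X]}
    (hP : ∀ i, P i ≠ 0) (hQ : ∀ i, Q i ≠ 0) {s : Set R}
    (hPs : ∀ i, ∀ x ∈ (P i).roots, x ∈ s) (hQs : ∀ i, ∀ x ∈ (Q i).roots, x ∈ s)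
    {d : ι → ℤ} {x : R} (hx : x ∈ (zpowNum P Q d).roots) : x ∈ s := by
  have hroot := (mem_roots (zpowNum_ne_zero hP hQ d)).1 hx
  rw [IsRoot.def, ← coe_evalRingHom, map_zpowNum] at hroot
  by_contra hxs
  refine zpowNum_ne_zero (fun i hi => hxs (hPs i x ((mem_roots (hP i)).2 hi)))
    (fun i hi => hxs (hQs i x ((mem_roots (hQ i)).2 hi))) d hroot

end ZPowNum

section ShiftRatio

variable {R : Type*} [CommRing R] [IsDomain R] (c : R)

noncomputable def orbitRoots (w : R[X]) : Multiset (R ⧸ AddSubgroup.zmultiples c) :=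
  w.roots.map (↑)

theorem orbitRoots_mul {u v : R[X]} (huv : u * v ≠ 0) :
    orbitRoots c (u * v) = orbitRoots c u + orbitRoots c v := by
  rw [orbitRoots, roots_mul huv, Multiset.map_add]
  rfl

theorem orbitRoots_taylor (w : R[X]) : orbitRoots c (taylor c w) = orbitRoots c w := by
  have hroots : (taylor c w).roots = w.roots.map (· - c) := by
    simpa [taylor_apply] using roots_comp_C_mul_X_add_C w 1 c isUnit_one
  rw [orbitRoots, hroots, Multiset.map_map]
  refine Multiset.map_congr rfl fun x _ => ?_
  exact QuotientAddGroup.eq_iff_sub_mem.2 (by simp [AddSubgroup.mem_zmultiples c])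

/-- `N / N' = σ_c(f) / f` with `f = u / v`, where `σ_c = taylor c` is the substitution
`x ↦ x + c`. -/
def IsShiftRatio (N N' : R[X]) : Prop :=
  ∃ u v : R[X], u ≠ 0 ∧ v ≠ 0 ∧ N * u * taylor c v = N' * taylor c u * v

variable {c}

namespace IsShiftRatio

theorem refl (N : R[X]) : IsShiftRatio c N N :=
  ⟨1, 1, one_ne_zero, one_ne_zero, by ring⟩

theorem symm {N N' : R[X]} (h : IsShiftRatio c N N') : IsShiftRatio c N' N := by
  obtain ⟨u, v, hu, hv, h⟩ := h
  exact ⟨v, u, hv, hu, by linear_combination -h⟩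

theorem trans {N N' N'' : R[X]} (h : IsShiftRatio c N N') (h' : IsShiftRatio c N' N'') :
    IsShiftRatio c N N'' := by
  obtain ⟨u, v, hu, hv, h⟩ := h
  obtain ⟨u', v', hu', hv', h'⟩ := h'
  refine ⟨u * u', v * v', mul_ne_zero hu hu', mul_ne_zero hv hv', ?_⟩
  simp only [taylor_mul]
  linear_combination (u' * taylor c v') * h + (taylor c u * v) * h'

theorem mul {N N' M M' : R[X]} (h : IsShiftRatio c N N') (h' : IsShiftRatio c M M') :
    IsShiftRatio c (N * M) (N' * M') := by
  obtain ⟨u, v, hu, hv, h⟩ := h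
  obtain ⟨u', v', hu', hv', h'⟩ := h'
  refine ⟨u * u', v * v', mul_ne_zero hu hu', mul_ne_zero hv hv', ?_⟩
  simp only [taylor_mul]
  linear_combination (M * u' * taylor c v') * h + (N' * taylor c u * v) * h'

theorem leadingCoeff_eq {N N' : R[X]} (h : IsShiftRatio c N N') :
    N.leadingCoeff = N'.leadingCoeff := by
  obtain ⟨u, v, hu, hv, h⟩ := h
  have hlc := congrArg leadingCoeff h
  simp only [leadingCoeff_mul, leadingCoeff_taylor] at hlc
  exact mul_right_cancel₀ (leadingCoeff_ne_zero.2 hv)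
    (mul_right_cancel₀ (leadingCoeff_ne_zero.2 hu) (by linear_combination hlc))

theorem orbitRoots_eq {N N' : R[X]} (h : IsShiftRatio c N N') (hN : N ≠ 0) :
    orbitRoots c N = orbitRoots c N' := by
  obtain ⟨u, v, hu, hv, h⟩ := h
  have hTu : taylor c u ≠ 0 := mt (taylor_eq_zero c u).1 hu
  have hTv : taylor c v ≠ 0 := mt (taylor_eq_zero c v).1 hv
  have hN' : N' ≠ 0 := by
    rintro rfl
    simp [hN, hu, hTv] at h
  have horb := congrArg (orbitRoots c) h
  rw [orbitRoots_mul c (by simp [*]), orbitRoots_mul c (by simp [*]),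
    orbitRoots_mul c (by simp [*]), orbitRoots_mul c (by simp [*]),
    orbitRoots_taylor, orbitRoots_taylor] at horb
  exact add_right_cancel (add_right_cancel horb)

end IsShiftRatio

theorem isShiftRatio_X_sub_C_sub (β : R) : IsShiftRatio c (X - C β) (X - C (β - c)) :=
  ⟨1, X - C β, one_ne_zero, X_sub_C_ne_zero β, by
    simp only [taylor_one, map_sub, taylor_X, taylor_C, map_one]
    ring⟩

theorem isShiftRatio_X_sub_C_sub_zsmul (β : R) (t : ℤ) :
    IsShiftRatio c (X - C β) (X - C (β - t • c)) := by
  induction t using Int.induction_on with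
  | zero => simpa using IsShiftRatio.refl (X - C β)
  | succ n ih =>
    convert ih.trans (isShiftRatio_X_sub_C_sub (β - (n : ℤ) • c)) using 3
    rw [add_zsmul, one_zsmul, sub_sub]
  | pred n ih =>
    refine ih.trans (IsShiftRatio.symm ?_)
    convert isShiftRatio_X_sub_C_sub (β - (-(n : ℤ) - 1) • c) using 3
    rw [sub_zsmul, one_zsmul]
    ring

theorem isShiftRatio_X_sub_C_of_mk_eq {β δ : R}
    (h : (β : R ⧸ AddSubgroup.zmultiples c) = δ) : IsShiftRatio c (X - C β) (X - C δ) := by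
  obtain ⟨t, ht⟩ := AddSubgroup.mem_zmultiples_iff.1 (QuotientAddGroup.eq_iff_sub_mem.1 h)
  rw [← sub_sub_cancel β δ, ← ht]
  exact isShiftRatio_X_sub_C_sub_zsmul β t

theorem isShiftRatio_prod_X_sub_C_of_map_mk_eq [DecidableEq R] {M M' : Multiset R}
    (h : M.map ((↑) : R → R ⧸ AddSubgroup.zmultiples c) = M'.map (↑)) :
    IsShiftRatio c (M.map (X - C ·)).prod (M'.map (X - C ·)).prod := by
  induction M using Multiset.induction_on generalizing M' with
  | empty =>
    obtain rfl : M' = 0 := Multiset.map_eq_zero.1 (h.symm.trans (Multiset.map_zero _))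
    exact IsShiftRatio.refl _
  | cons β M ih =>
    obtain ⟨δ, hδ, hδβ⟩ :=
      Multiset.mem_map.1 (h ▸ Multiset.mem_map_of_mem _ (Multiset.mem_cons_self β M))
    rw [← Multiset.cons_erase hδ, Multiset.map_cons, Multiset.map_cons, hδβ,
      Multiset.cons_inj_right] at h
    rw [← Multiset.cons_erase hδ, Multiset.map_cons, Multiset.map_cons, Multiset.prod_cons,
      Multiset.prod_cons]
    exact (isShiftRatio_X_sub_C_of_mk_eq hδβ.symm).mul (ih h)

end ShiftRatio

theorem isShiftRatio_iff {K : Type*} [Field K] [IsAlgClosed K] {c : K} {N N' : K[X]}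
    (hN : N ≠ 0) :
    IsShiftRatio c N N' ↔
      N.leadingCoeff = N'.leadingCoeff ∧ orbitRoots c N = orbitRoots c N' := by
  classical
  refine ⟨fun h => ⟨h.leadingCoeff_eq, h.orbitRoots_eq hN⟩, fun ⟨hlc, horb⟩ => ?_⟩
  rw [(IsAlgClosed.splits N).eq_prod_roots, (IsAlgClosed.splits N').eq_prod_roots, hlc]
  exact (IsShiftRatio.refl _).mul (isShiftRatio_prod_X_sub_C_of_map_mk_eq horb)

section Zset

variable {K : Type*} [Field K]

local notation "algX" => algebraMap K[X] (FractionRing K[X])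

theorem shiftHom_iterate_algebraMap (ℓ : ℕ) (w : K[X]) :
    (shiftHom K)^[ℓ] (algX w) = algX (taylor (ℓ : K) w) := by
  induction ℓ with
  | zero => simp
  | succ n ih =>
    rw [Function.iterate_succ_apply', ih, shiftHom, IsFractionRing.lift_algebraMap,
      RingHom.comp_apply, coe_eval₂RingHom, ← comp, ← C_1, ← taylor_apply, taylor_taylor,
      Nat.cast_succ, add_comm]

theorem exists_shiftHom_iterate_div_iff {ℓ : ℕ} {N N' : K[X]} (hN' : N' ≠ 0) :
    (∃ f : FractionRing K[X], f ≠ 0 ∧ algX N / algX N' = (shiftHom K)^[ℓ] f / f) ↔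
      IsShiftRatio (ℓ : K) N N' := by
  have hinj := IsFractionRing.injective K[X] (FractionRing K[X])
  have halg : ∀ {w : K[X]}, w ≠ 0 → algX w ≠ 0 := fun hw => (map_ne_zero_iff _ hinj).2 hw
  have hT : ∀ {w : K[X]}, w ≠ 0 → algX (taylor (ℓ : K) w) ≠ 0 :=
    fun hw => halg (mt (taylor_eq_zero _ _).1 hw)
  have hσ : ∀ u v : K[X], (shiftHom K)^[ℓ] (algX u / algX v)
      = algX (taylor (ℓ : K) u) / algX (taylor (ℓ : K) v) := by
    intro u v
    rw [← RingHom.coe_pow, map_div₀, RingHom.coe_pow, shiftHom_iterate_algebraMap,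
      shiftHom_iterate_algebraMap]
  constructor
  · rintro ⟨f, hf, h⟩
    obtain ⟨u, v, hv, rfl⟩ := IsFractionRing.div_surjective K[X] f
    have hv : v ≠ 0 := nonZeroDivisors.ne_zero hv
    have hu : u ≠ 0 := by rintro rfl; simp at hf
    refine ⟨u, v, hu, hv, hinj ?_⟩
    rw [hσ, div_div_div_eq, div_eq_div_iff (halg hN') (mul_ne_zero (hT hv) (halg hu))] at h
    simp only [map_mul]
    linear_combination h
  · rintro ⟨u, v, hu, hv, h⟩
    refine ⟨algX u / algX v, div_ne_zero (halg hu) (halg hv), ?_⟩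
    rw [hσ, div_div_div_eq, div_eq_div_iff (halg hN') (mul_ne_zero (hT hv) (halg hu))]
    have h' := congrArg algX h
    simp only [map_mul] at h'
    linear_combination h'

variable {m : ℕ}

theorem mem_Zset_iff_isShiftRatio (ℓ : ℕ) {a : Fin m → FractionRing K[X]}
    {P Q : Fin m → K[X]}
    (hP : ∀ i, P i ≠ 0) (hQ : ∀ i, Q i ≠ 0) (ha : ∀ i, a i * algX (Q i) = algX (P i))
    (d : Fin m → ℤ) :
    d ∈ Zset ℓ a ↔ IsShiftRatio (ℓ : K) (zpowNum P Q d) (zpowNum Q P d) := by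
  have hprod : ∏ i, a i ^ d i = algX (zpowNum P Q d) / algX (zpowNum Q P d) := by
    have hQ' : ∀ i, algX (Q i) ≠ 0 :=
      fun i => (map_ne_zero_iff _ (IsFractionRing.injective _ _)).2 (hQ i)
    simp only [fun i => eq_div_of_mul_eq (hQ' i) (ha i), prod_div_zpow_eq_zpowNum_div,
      map_zpowNum]
  rw [← exists_shiftHom_iterate_div_iff (zpowNum_ne_zero hQ hP d), ← hprod]
  rfl

end Zset

theorem Polynomial.map_ne_zero_of_leadingCoeff_ne_zero {R S : Type*} [Semiring R] [Semiring S]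
    (f : R →+* S) {p : R[X]} (h : f p.leadingCoeff ≠ 0) : p.map f ≠ 0 := by
  rwa [← leadingCoeff_ne_zero, leadingCoeff_map_of_leadingCoeff_ne_zero f h]

theorem Multiset.map_eq_map_iff_map_mk_eq {α δ : Type*} (r : Setoid α) {h : α → δ}
    (hr : ∀ x y, Quotient.mk r x = Quotient.mk r y ↔ h x = h y) (M M' : Multiset α) :
    M.map h = M'.map h ↔ M.map (Quotient.mk r) = M'.map (Quotient.mk r) := by
  have hinj :
      Function.Injective (Quotient.lift h fun x y hxy => (hr x y).1 (Quotient.sound hxy)) := by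
    rintro ⟨x⟩ ⟨y⟩ hxy
    exact (hr x y).2 hxy
  rw [← (Multiset.map_injective hinj).eq_iff, Multiset.map_map, Multiset.map_map]
  rfl

theorem Multiset.map_eq_map_iff_of_forall_eq_iff {α β γ : Type*} {S : Set α} {f : α → β}
    {g : α → γ} (hfg : ∀ x ∈ S, ∀ y ∈ S, f x = f y ↔ g x = g y) {M M' : Multiset α}
    (hM : ∀ x ∈ M, x ∈ S) (hM' : ∀ x ∈ M', x ∈ S) :
    M.map f = M'.map f ↔ M.map g = M'.map g := by
  lift M to Multiset S using hM
  lift M' to Multiset S using hM'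
  simp only [Multiset.map_map]
  let r : Setoid S := Setoid.ker (f ∘ (↑))
  exact (map_eq_map_iff_map_mk_eq r (fun _ _ => Quotient.eq) M M').trans
    (map_eq_map_iff_map_mk_eq r (fun x y => Quotient.eq.trans (hfg x x.2 y y.2)) M M').symm

theorem Polynomial.map_roots_eq_of_forall_mem_range {A B : Type*} [CommRing A] [IsDomain A]
    [CommRing B] [IsDomain B] {j : A →+* B} (hj : Function.Injective j) {p : A[X]}
    (hp : ∀ x ∈ (p.map j).roots, x ∈ Set.range j) : p.roots.map j = (p.map j).roots := by
  classical
  refine le_antisymm (map_roots_le_of_injective p hj) (Multiset.le_iff_count.2 fun b => ?_)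
  by_cases hb : b ∈ (p.map j).roots
  · obtain ⟨a, rfl⟩ := hp b hb
    rw [count_roots, ← eq_rootMultiplicity_map hj, Multiset.count_map_eq_count' _ _ hj,
      count_roots]
  · simp [Multiset.count_eq_zero.2 hb]

theorem orbitRoots_map_eq_iff {A K L : Type*} [CommRing A] [IsDomain A] [Field K]
    [IsAlgClosed K] [Field L] {j : A →+* K} (hj : Function.Injective j) (ψ : A →+* L)
    {c : K} {c' : L} {S : Set A}
    (hS : ∀ x ∈ S, ∀ y ∈ S, ((j x : K ⧸ AddSubgroup.zmultiples c) = j y ↔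
      (ψ x : L ⧸ AddSubgroup.zmultiples c') = ψ y))
    {p p' : A[X]} (hp : ψ p.leadingCoeff ≠ 0) (hp' : ψ p'.leadingCoeff ≠ 0)
    (hpS : ∀ x ∈ (p.map j).roots, x ∈ j '' S)
    (hp'S : ∀ x ∈ (p'.map j).roots, x ∈ j '' S) :
    orbitRoots c (p.map j) = orbitRoots c (p'.map j) ↔
      orbitRoots c' (p.map ψ) = orbitRoots c' (p'.map ψ) := by
  -- over `A` both specializations read off their roots from the same multiset `q.roots`
  have key : ∀ q : A[X], ψ q.leadingCoeff ≠ 0 → (∀ x ∈ (q.map j).roots, x ∈ j '' S) →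
      (∀ a ∈ q.roots, a ∈ S) ∧
      orbitRoots c (q.map j) = q.roots.map (fun a => (j a : K ⧸ AddSubgroup.zmultiples c)) ∧
      orbitRoots c' (q.map ψ) =
        q.roots.map (fun a => (ψ a : L ⧸ AddSubgroup.zmultiples c')) := by
    intro q hq hqS
    have hroots : q.roots.map j = (q.map j).roots :=
      map_roots_eq_of_forall_mem_range hj fun x hx => Set.image_subset_range _ _ (hqS x hx)
    have hq0 : q.map ψ ≠ 0 := map_ne_zero_of_leadingCoeff_ne_zero ψ hq
    have hcard : Multiset.card q.roots = q.natDegree := by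
      rw [← Multiset.card_map j, hroots, IsAlgClosed.card_roots_eq_natDegree,
        natDegree_map_eq_of_injective hj]
    refine ⟨fun a ha => ?_, ?_, ?_⟩
    · obtain ⟨b, hb, hba⟩ := hqS (j a) (hroots ▸ Multiset.mem_map_of_mem j ha)
      exact hj hba ▸ hb
    · rw [orbitRoots, ← hroots, Multiset.map_map]
      rfl
    · rw [orbitRoots, ← roots_map_of_map_ne_zero_of_card_eq_natDegree ψ hq0 hcard,
        Multiset.map_map]
      rfl
  obtain ⟨hpS', hpj, hpψ⟩ := key p hp hpS
  obtain ⟨hp'S', hp'j, hp'ψ⟩ := key p' hp' hp'S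
  rw [hpj, hp'j, hpψ, hp'ψ]
  exact Multiset.map_eq_map_iff_of_forall_eq_iff hS hpS' hp'S'

section Specialization

variable {Ω : Type*} [Field Ω]

def unitsClosure (T : Set Ω) : Submonoid Ω :=
  (Subgroup.closure (Units.val ⁻¹' T)).toSubmonoid.map (Units.coeHom Ω)

theorem mem_unitsClosure {T : Set Ω} {x : Ω} (hx : x ∈ T) (hx0 : x ≠ 0) :
    x ∈ unitsClosure T :=
  ⟨Units.mk0 x hx0, Subgroup.subset_closure hx, rfl⟩

theorem isFGAddOrMulSubgroup_unitsClosure {T : Set Ω} (hT : T.Finite) :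
    IsFGAddOrMulSubgroup (unitsClosure T : Set Ω) :=
  Or.inr ⟨_, (Subgroup.fg_iff _).2 ⟨_, rfl, hT.preimage Units.val_injective.injOn⟩, rfl⟩

theorem isFGAddOrMulSubgroup_addClosure (F : Finset Ω) :
    IsFGAddOrMulSubgroup (AddSubgroup.closure (F : Set Ω) : Set Ω) :=
  Or.inl ⟨_, ⟨F, rfl⟩, rfl⟩

variable [IsAlgClosed Ω] [CharZero Ω] {k : Type*} [Field k] [Algebra k Ω] {kbar : Type*}
  [Field kbar] [Algebra k kbar] {D : Subalgebra k Ω} {φ : D →ₐ[k] kbar}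

theorem isBasicOpen_specB_inter {Γ₁ Γ₂ : Set Ω} (h₁ : IsFGAddOrMulSubgroup Γ₁)
    (h₂ : IsFGAddOrMulSubgroup Γ₂) :
    IsBasicOpen k kbar D (specB k kbar D Γ₁ ∩ specB k kbar D Γ₂) := by
  classical
  refine ⟨{Γ₁, Γ₂}, Finset.insert_nonempty _ _, by simp [h₁, h₂], ?_⟩
  ext φ
  simp

theorem map_ne_zero_of_mem_specB_unitsClosure {T : Set Ω}
    (hφ : φ ∈ specB k kbar D (unitsClosure T)) {x : D} (hx : (x : Ω) ∈ unitsClosure T) :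
    φ x ≠ 0 := by
  obtain ⟨ψ, -, rfl⟩ := hφ
  obtain ⟨u, hu, hux⟩ := hx
  have hu' : ((u⁻¹ : Ωˣ) : Ω) ∈ (unitsClosure T : Set Ω) :=
    ⟨u⁻¹, (Subgroup.closure _).inv_mem hu, rfl⟩
  have hmul : Subalgebra.inclusion (le_algAdj k D _) x
      * (⟨_, subset_algAdj k D _ hu'⟩ : algAdj k D (unitsClosure T)) = 1 :=
    Subtype.ext (by simp [← hux])
  intro h
  have h1 := congrArg ψ hmul
  rw [map_mul, map_one, show ψ (Subalgebra.inclusion _ x) = 0 from h, zero_mul] at h1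
  exact zero_ne_one h1

theorem map_eq_map_iff_of_mem_specB {Γ : Set Ω} (hφ : φ ∈ specB k kbar D Γ) {x y : D}
    (hx : (x : Ω) ∈ Γ) (hy : (y : Ω) ∈ Γ) : φ x = φ y ↔ x = y := by
  obtain ⟨ψ, hψ, rfl⟩ := hφ
  exact ⟨fun h => Subtype.ext (hψ _ _ hx hy h), fun h => h ▸ rfl⟩

theorem leadingCoeff_map_eq_iff_of_mem_specB {T : Set Ω}
    (hφ : φ ∈ specB k kbar D (unitsClosure T)) {W W' : D[X]}
    (hW : algebraMap D Ω W.leadingCoeff ∈ unitsClosure T)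
    (hW' : algebraMap D Ω W'.leadingCoeff ∈ unitsClosure T) :
    (W.map (algebraMap D Ω)).leadingCoeff = (W'.map (algebraMap D Ω)).leadingCoeff ↔
      (W.map φ.toRingHom).leadingCoeff = (W'.map φ.toRingHom).leadingCoeff := by
  have hinj : Function.Injective (algebraMap D Ω) := Subtype.val_injective
  rw [leadingCoeff_map_of_injective hinj, leadingCoeff_map_of_injective hinj, hinj.eq_iff,
    leadingCoeff_map_of_leadingCoeff_ne_zero _ (map_ne_zero_of_mem_specB_unitsClosure hφ hW),
    leadingCoeff_map_of_leadingCoeff_ne_zero _ (map_ne_zero_of_mem_specB_unitsClosure hφ hW')]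
  exact (map_eq_map_iff_of_mem_specB hφ hW hW').symm

theorem orbitRoots_map_eq_iff_of_mem_specB {H : AddSubgroup Ω} (h1 : (1 : Ω) ∈ H)
    (hφ : φ ∈ specB k kbar D H) (ℓ : ℕ) {W W' : D[X]} (hW : φ W.leadingCoeff ≠ 0)
    (hW' : φ W'.leadingCoeff ≠ 0) (hWH : ∀ x ∈ (W.map (algebraMap D Ω)).roots, x ∈ H)
    (hW'H : ∀ x ∈ (W'.map (algebraMap D Ω)).roots, x ∈ H) :
    orbitRoots (ℓ : Ω) (W.map (algebraMap D Ω)) =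
        orbitRoots (ℓ : Ω) (W'.map (algebraMap D Ω)) ↔
      orbitRoots (ℓ : kbar) (W.map φ.toRingHom) =
        orbitRoots (ℓ : kbar) (W'.map φ.toRingHom) := by
  obtain ⟨ψ, hψ, rfl⟩ := hφ
  let A := algAdj k D (H : Set Ω)
  let e : D →+* A := (Subalgebra.inclusion (le_algAdj k D H)).toRingHom
  have hval : ∀ V : D[X], (V.map e).map (algebraMap A Ω) = V.map (algebraMap D Ω) :=
    fun V => by rw [map_map]; rfl
  have hψe : ∀ V : D[X], (V.map e).map ψ.toRingHom
      = V.map (ψ.comp (Subalgebra.inclusion (le_algAdj k D H))).toRingHom :=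
    fun V => by rw [map_map]; rfl
  have hlc : ∀ V : D[X], ψ (V.map e).leadingCoeff = ψ (e V.leadingCoeff) := fun V => by
    rw [leadingCoeff_map_of_injective (Subalgebra.inclusion_injective _)]
  have hroots : ∀ V : D[X], (∀ x ∈ (V.map (algebraMap D Ω)).roots, x ∈ H) →
      ∀ x ∈ ((V.map e).map (algebraMap A Ω)).roots,
        x ∈ algebraMap A Ω '' {z | (z : Ω) ∈ H} :=
    fun V hV x hx =>
      ⟨⟨x, subset_algAdj k D H (hV x (hval V ▸ hx))⟩, hV x (hval V ▸ hx), rfl⟩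
  have hS : ∀ x ∈ {z : A | (z : Ω) ∈ H}, ∀ y ∈ {z : A | (z : Ω) ∈ H},
      ((algebraMap A Ω x : Ω ⧸ AddSubgroup.zmultiples (ℓ : Ω)) = algebraMap A Ω y ↔
        (ψ x : kbar ⧸ AddSubgroup.zmultiples (ℓ : kbar)) = ψ y) := by
    -- `ℤ ℓ ⊆ H`, so the injectivity of `ψ` on `H` reflects `ψ x - ψ y ∈ ℤ ℓ`
    intro x hx y hy
    simp only [QuotientAddGroup.eq_iff_sub_mem, AddSubgroup.mem_zmultiples_iff]
    refine exists_congr fun t => ?_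
    have htℓ : ((t • (ℓ : A) : A) : Ω) ∈ H := by
      simpa using H.zsmul_mem (H.nsmul_mem h1 ℓ) t
    calc t • (ℓ : Ω) = algebraMap A Ω x - algebraMap A Ω y ↔ t • (ℓ : A) = x - y := by
          rw [Subtype.ext_iff]; simp
      _ ↔ ψ (t • (ℓ : A)) = ψ (x - y) :=
          ⟨fun h => h ▸ rfl, fun h => Subtype.ext (hψ _ _ htℓ (H.sub_mem hx hy) h)⟩
      _ ↔ t • (ℓ : kbar) = ψ x - ψ y := by simp
  have := orbitRoots_map_eq_iff Subtype.val_injective ψ.toRingHom hS (p := W.map e)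
    (p' := W'.map e) ((hlc W).trans_ne hW) ((hlc W').trans_ne hW') (hroots W hWH)
    (hroots W' hW'H)
  rwa [hval, hval, hψe, hψe] at this

theorem isShiftRatio_map_iff_of_mem_specB [IsAlgClosed kbar] {T : Set Ω}
    {H : AddSubgroup Ω} (h1 : (1 : Ω) ∈ H) (hφT : φ ∈ specB k kbar D (unitsClosure T))
    (hφH : φ ∈ specB k kbar D H) (ℓ : ℕ) {W W' : D[X]}
    (hW : algebraMap D Ω W.leadingCoeff ∈ unitsClosure T)
    (hW' : algebraMap D Ω W'.leadingCoeff ∈ unitsClosure T)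
    (hWH : ∀ x ∈ (W.map (algebraMap D Ω)).roots, x ∈ H)
    (hW'H : ∀ x ∈ (W'.map (algebraMap D Ω)).roots, x ∈ H) :
    IsShiftRatio (ℓ : Ω) (W.map (algebraMap D Ω)) (W'.map (algebraMap D Ω)) ↔
      IsShiftRatio (ℓ : kbar) (W.map φ.toRingHom) (W'.map φ.toRingHom) := by
  have hφW := map_ne_zero_of_mem_specB_unitsClosure hφT hW
  have hφW' := map_ne_zero_of_mem_specB_unitsClosure hφT hW'
  have hW0 : W.map (algebraMap D Ω) ≠ 0 :=
    (Polynomial.map_ne_zero_iff Subtype.val_injective).2 fun h => by simp [h] at hφW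
  rw [isShiftRatio_iff hW0, isShiftRatio_iff (map_ne_zero_of_leadingCoeff_ne_zero _ hφW)]
  exact (leadingCoeff_map_eq_iff_of_mem_specB hφT hW hW').and
    (orbitRoots_map_eq_iff_of_mem_specB h1 hφH ℓ hφW hφW' hWH hW'H)

theorem isShiftRatio_map_zpowNum_iff_of_mem_specB [IsAlgClosed kbar] {T : Set Ω}
    {H : AddSubgroup Ω} (h1 : (1 : Ω) ∈ H) (hφT : φ ∈ specB k kbar D (unitsClosure T))
    (hφH : φ ∈ specB k kbar D H) (ℓ : ℕ) {ι : Type*} [Fintype ι] {p q : ι → D[X]}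
    (hp : ∀ i, (p i).map (algebraMap D Ω) ≠ 0) (hq : ∀ i, (q i).map (algebraMap D Ω) ≠ 0)
    (hlcp : ∀ i, algebraMap D Ω (p i).leadingCoeff ∈ unitsClosure T)
    (hlcq : ∀ i, algebraMap D Ω (q i).leadingCoeff ∈ unitsClosure T)
    (hrootp : ∀ i, ∀ x ∈ ((p i).map (algebraMap D Ω)).roots, x ∈ H)
    (hrootq : ∀ i, ∀ x ∈ ((q i).map (algebraMap D Ω)).roots, x ∈ H) (d : ι → ℤ) :
    IsShiftRatio (ℓ : Ω) ((zpowNum p q d).map (algebraMap D Ω))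
        ((zpowNum q p d).map (algebraMap D Ω)) ↔
      IsShiftRatio (ℓ : kbar) ((zpowNum p q d).map φ.toRingHom)
        ((zpowNum q p d).map φ.toRingHom) := by
  refine isShiftRatio_map_iff_of_mem_specB h1 hφT hφH ℓ
    (map_leadingCoeff_zpowNum_mem (algebraMap D Ω).toMonoidHom hlcp hlcq d)
    (map_leadingCoeff_zpowNum_mem (algebraMap D Ω).toMonoidHom hlcq hlcp d) ?_ ?_
  · rw [← zpowNum_map]
    exact fun x => mem_of_mem_roots_zpowNum hp hq hrootp hrootq
  · rw [← zpowNum_map]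
    exact fun x => mem_of_mem_roots_zpowNum hq hp hrootq hrootp

end Specialization

section BasicOpen

variable {Ω : Type*} [Field Ω] [IsAlgClosed Ω] [CharZero Ω] {k : Type*} [Field k] [Algebra k Ω]
  {kbar : Type*} [Field kbar] [Algebra k kbar] [IsAlgClosed kbar] {D : Subalgebra k Ω}

theorem exists_isBasicOpen_forall_isShiftRatio_map_iff {ι : Type*} [Fintype ι]
    {p q : ι → D[X]} (hp : ∀ i, (p i).map (algebraMap D Ω) ≠ 0)
    (hq : ∀ i, (q i).map (algebraMap D Ω) ≠ 0) (ℓ : ℕ) :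
    ∃ U : Set (D →ₐ[k] kbar), IsBasicOpen k kbar D U ∧ ∀ φ ∈ U,
      (∀ i, (p i).map φ.toRingHom ≠ 0 ∧ (q i).map φ.toRingHom ≠ 0) ∧ ∀ d : ι → ℤ,
        (IsShiftRatio (ℓ : Ω) ((zpowNum p q d).map (algebraMap D Ω))
            ((zpowNum q p d).map (algebraMap D Ω)) ↔
          IsShiftRatio (ℓ : kbar) ((zpowNum p q d).map φ.toRingHom)
            ((zpowNum q p d).map φ.toRingHom)) := by
  classical
  set e := algebraMap D Ω
  let T : Set Ω :=
    Set.range (fun i => e (p i).leadingCoeff) ∪ Set.range (fun i => e (q i).leadingCoeff)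
  let F : Finset Ω := insert 1 (Finset.univ.biUnion fun i =>
    ((p i).map e).roots.toFinset ∪ ((q i).map e).roots.toFinset)
  let H := AddSubgroup.closure (F : Set Ω)
  have hlcT : ∀ {W : D[X]}, W.map e ≠ 0 → e W.leadingCoeff ∈ T →
      e W.leadingCoeff ∈ unitsClosure T := fun hW hT => mem_unitsClosure hT <| by
    rwa [← leadingCoeff_map_of_injective Subtype.val_injective, leadingCoeff_ne_zero]
  have hlcp : ∀ i, e (p i).leadingCoeff ∈ unitsClosure T :=
    fun i => hlcT (hp i) (Or.inl ⟨i, rfl⟩)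
  have hlcq : ∀ i, e (q i).leadingCoeff ∈ unitsClosure T :=
    fun i => hlcT (hq i) (Or.inr ⟨i, rfl⟩)
  have h1 : (1 : Ω) ∈ H := AddSubgroup.subset_closure (Finset.mem_insert_self 1 _)
  have hrootp : ∀ i, ∀ x ∈ ((p i).map e).roots, x ∈ H := fun i x hx =>
    AddSubgroup.subset_closure (Finset.mem_insert_of_mem (Finset.mem_biUnion.2
      ⟨i, Finset.mem_univ i, Finset.mem_union_left _ (Multiset.mem_toFinset.2 hx)⟩))
  have hrootq : ∀ i, ∀ x ∈ ((q i).map e).roots, x ∈ H := fun i x hx =>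
    AddSubgroup.subset_closure (Finset.mem_insert_of_mem (Finset.mem_biUnion.2
      ⟨i, Finset.mem_univ i, Finset.mem_union_right _ (Multiset.mem_toFinset.2 hx)⟩))
  refine ⟨specB k kbar D (unitsClosure T) ∩ specB k kbar D H, isBasicOpen_specB_inter
    (isFGAddOrMulSubgroup_unitsClosure ((Set.finite_range _).union (Set.finite_range _)))
    (isFGAddOrMulSubgroup_addClosure F), ?_⟩
  rintro φ ⟨hφT, hφH⟩
  have hne : ∀ {W : D[X]}, e W.leadingCoeff ∈ unitsClosure T → W.map φ.toRingHom ≠ 0 :=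
    fun hW =>
      map_ne_zero_of_leadingCoeff_ne_zero _ (map_ne_zero_of_mem_specB_unitsClosure hφT hW)
  exact ⟨fun i => ⟨hne (hlcp i), hne (hlcq i)⟩,
    isShiftRatio_map_zpowNum_iff_of_mem_specB h1 hφT hφH ℓ hp hq hlcp hlcq hrootp hrootq⟩

end BasicOpen

theorem Zset_specialization_general
    {Ω : Type*} [Field Ω] [IsAlgClosed Ω] [CharZero Ω]
    (k : Type*) [Field k] [Algebra k Ω]
    (kbar : Type*) [Field kbar] [Algebra k kbar] [IsAlgClosure k kbar]
    (D : Subalgebra k Ω)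
    {m : ℕ} (ℓ : ℕ) (a : Fin m → FractionRing (Polynomial Ω))
    (ha0 : ∀ i, a i ≠ 0)
    -- each `a_i` lies in `F(x)`, i.e. is a quotient of elements of `D[x]`
    (haF : ∀ i, ∃ p q : Polynomial ↥D, q ≠ 0 ∧ a i * embPolyX D q = embPolyX D p) :
    ∃ U : Set (↥D →ₐ[k] kbar), IsBasicOpen k kbar D U ∧
      ∀ φ ∈ U, ∃ a' : Fin m → FractionRing (Polynomial kbar),
        (∀ i, a' i ≠ 0 ∧ SpecRat D φ (a i) (a' i)) ∧
        Zset ℓ a = Zset ℓ a' := by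
  have : IsAlgClosed kbar := IsAlgClosure.isAlgClosed k
  choose p q hq hpq using haF
  have hqΩ : ∀ i, (q i).map (algebraMap D Ω) ≠ 0 :=
    fun i => (Polynomial.map_ne_zero_iff Subtype.val_injective).2 (hq i)
  have hpΩ : ∀ i, (p i).map (algebraMap D Ω) ≠ 0 := fun i h => ha0 i <| by
    simpa [embPolyX, h, hqΩ i] using hpq i
  obtain ⟨U, hU, hφU⟩ :=
    exists_isBasicOpen_forall_isShiftRatio_map_iff (kbar := kbar) hpΩ hqΩ ℓ
  refine ⟨U, hU, fun φ hφ => ?_⟩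
  obtain ⟨hpqφ, hiff⟩ := hφU φ hφ
  have halg : ∀ {w : kbar[X]}, w ≠ 0 → algebraMap kbar[X] (FractionRing kbar[X]) w ≠ 0 :=
    fun hw => (map_ne_zero_iff _ (IsFractionRing.injective _ _)).2 hw
  let a' : Fin m → FractionRing kbar[X] := fun i =>
    algebraMap _ _ ((p i).map φ.toRingHom) / algebraMap _ _ ((q i).map φ.toRingHom)
  have hrel : ∀ i, a' i * algebraMap _ _ ((q i).map φ.toRingHom) =
      algebraMap _ _ ((p i).map φ.toRingHom) :=
    fun i => div_mul_cancel₀ _ (halg (hpqφ i).2)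
  refine ⟨a', fun i => ⟨div_ne_zero (halg (hpqφ i).1) (halg (hpqφ i).2),
      p i, q i, (hpqφ i).1, (hpqφ i).2, hpq i, hrel i⟩, ?_⟩
  ext d
  rw [mem_Zset_iff_isShiftRatio ℓ hpΩ hqΩ hpq,
    mem_Zset_iff_isShiftRatio ℓ (fun i => (hpqφ i).1) (fun i => (hpqφ i).2) hrel,
    zpowNum_map, zpowNum_map, zpowNum_map, zpowNum_map]
  exact hiff d

/-- Lemma 5.5 of the paper. For nonzero `a₁,…,a_m ∈ F(x) ⊆ Ω(x)` and
`ℓ ≥ 0` there is a basic open subset `U` of `Hom_k(D,k̄)` such that each `φ ∈ U` specializes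
the `a_i` to well-defined nonzero `φ(a_i) ∈ k̄(x)` with
`𝒵(a₁,…,a_m;ℓ) = 𝒵(φ(a₁),…,φ(a_m);ℓ)`. -/
theorem Zset_specialization
    {Ω : Type*} [Field Ω] [IsAlgClosed Ω] [CharZero Ω]
    (k : Type*) [Field k] [Algebra k Ω]
    (kbar : Type*) [Field kbar] [Algebra k kbar] [IsAlgClosure k kbar]
    (D : Subalgebra k Ω) (hD : D.FG)
    {m : ℕ} (ℓ : ℕ) (a : Fin m → FractionRing (Polynomial Ω))
    (ha0 : ∀ i, a i ≠ 0)
    -- each `a_i` lies in `F(x)`, i.e. is a quotient of elements of `D[x]`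
    (haF : ∀ i, ∃ p q : Polynomial ↥D, q ≠ 0 ∧ a i * embPolyX D q = embPolyX D p) :
    ∃ U : Set (↥D →ₐ[k] kbar), IsBasicOpen k kbar D U ∧
      ∀ φ ∈ U, ∃ a' : Fin m → FractionRing (Polynomial kbar),
        (∀ i, a' i ≠ 0 ∧ SpecRat D φ (a i) (a' i)) ∧
        Zset ℓ a = Zset ℓ a' :=
  Zset_specialization_general k kbar D ℓ a ha0 haF
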